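/- Let H be a real Hilbert space with fundamental symmetry Θ and Krein inner product B(x, y) := ⟪x, Θ y⟫. Let u : H → H be a linear map which is involutive (u ∘ u = id) and an adapted anti-isometry, i.e. B(u x, u y) = −B(x, y) for all x, y and u ∘ Θ = −Θ ∘ u. Then the fixed-point set W := {v ∈ H : u v = v} is a hypermaximal neutral subspace: W = {v ∈ H : B(v, w) = 0 for all w ∈ W}. -/
import Mathlib


open scoped RealInnerProductSpace

/-- In a real Krein space (real Hilbert space `H` with fundamental
symmetry `Θ` and Krein inner product `B x y = ⟪x, Θ y⟫`), the fixed-point set of an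
involutive adapted anti-isometry `u` is a hypermaximal neutral subspace. -/
theorem stmt_0 {H : Type*} [NormedAddCommGroup H] [InnerProductSpace ℝ H] [CompleteSpace H]
    (Θ : H →L[ℝ] H) (hΘ2 : ∀ x, Θ (Θ x) = x)
    (hΘsym : ∀ x y, ⟪Θ x, y⟫ = ⟪x, Θ y⟫)
    (u : H →ₗ[ℝ] H) (hu2 : ∀ x, u (u x) = x)
    (huB : ∀ x y, ⟪u x, Θ (u y)⟫ = -⟪x, Θ y⟫)
    (huΘ : ∀ x, u (Θ x) = -Θ (u x)) :
    {v : H | u v = v} = {v : H | ∀ w, u w = w → ⟪v, Θ w⟫ = 0} := by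
  ext v
  simp only [Set.mem_setOf_eq]
  constructor
  · intro hv w hw
    have h := huB v w
    rw [hv, hw] at h
    linarith
  · intro hv
    set p := v - u v with hp
    have hup : u p = -p := by
      simp [hp, map_sub, hu2, neg_sub]
    have hΘp : u (Θ p) = Θ p := by
      rw [huΘ, hup, map_neg, neg_neg]
    have h1 : ⟪v, p⟫ = 0 := by
      have := hv (Θ p) hΘp
      rwa [hΘ2] at this
    have h2 : ⟪u v, p⟫ = 0 := by
      have h := huB v (Θ p)
      rw [hΘp] at h
      rw [hΘ2] at h
      rw [h1] at h; simpa using h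
    have h1' : ⟪v, p⟫ = 0 := by
      have := hv (Θ p) hΘp
      rwa [hΘ2] at this
    have hpz : p = 0 := by
      have : ⟪p, p⟫ = 0 := by
        rw [hp, inner_sub_left, h1', h2]; ring
      exact inner_self_eq_zero.mp this
    have : v - u v = 0 := hpz
    exact (sub_eq_zero.mp this).symm
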